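/- arXiv:1506.05618 — 2 statements merged into one kernel-verified Lean document; each statement's English description precedes it below -/
import Mathlib

section
/- Let x₀, y₀ ∈ ℝ, let g : [x₀,∞) × [y₀,∞) → ℝ and K : [x₀,∞) × [y₀,∞) × [x₀,∞) × [y₀,∞) × ℝ → ℝ be continuous, and let q, r : [x₀,∞) × [y₀,∞) → [0,∞) be continuous such that |K(x,y,η,τ,u) − K(x,y,η,τ,v)| ≤ q(x,y) r(η,τ) |u − v| for all arguments and all u, v ∈ ℝ. If continuous functions u₁, u₂ : [x₀,∞) × [y₀,∞) → ℝ both satisfy u_i(x,y) = g(x,y) + ∫_{x₀}^{x} ∫_{x₀}^{s} ∫_{y₀}^{y} K(x,y,η,τ,u_i(η,τ)) dτ dη ds for all x ≥ x₀ and y ≥ y₀, then u₁ = u₂, i.e., the integral equation has at most one continuous solution. -/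
/-!
Fix a rectangle `[x₀, X] × [y₀, Y]` and bound `q(x, y) r(η, τ)` there by `C`. The difference
`d = u₁ - u₂` satisfies `|d(x, y)| ≤ C ∫∫∫ |d(η, τ)|`. Measured in the Bielecki norm
`max |d(x, y)| e^{-L (x - x₀)}`, integrating twice in the weighted variable gains a factor `1 / L²`
and once in `y` a factor `Y - y₀`, so this norm is at most `C (Y - y₀) / L²` times itself.
Choosing `L² ≥ 2 C (Y - y₀)` forces it to vanish.
-/

open Real Set

theorem integral_exp_mul_sub {a b L : ℝ} (hL : L ≠ 0) :
    ∫ t in a..b, exp (L * (t - a)) = (exp (L * (b - a)) - 1) / L := by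
  rw [intervalIntegral.integral_comp_sub_right (fun t => exp (L * t)),
    intervalIntegral.integral_comp_mul_left (fun t => exp t) hL, integral_exp]
  simp [div_eq_inv_mul]

theorem abs_intervalIntegral_le_exp {f : ℝ → ℝ} {a b C L : ℝ} (hab : a ≤ b) (hL : 0 < L)
    (hC : 0 ≤ C) (hf : ∀ t ∈ Icc a b, |f t| ≤ C * exp (L * (t - a))) :
    |∫ t in a..b, f t| ≤ C / L * exp (L * (b - a)) := by
  have hbound := intervalIntegral.norm_integral_le_of_norm_le (μ := MeasureTheory.volume)
    (f := f) (g := fun t => C * exp (L * (t - a))) hab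
    (.of_forall fun t ht => hf t (Ioc_subset_Icc_self ht))
    (Continuous.intervalIntegrable (by fun_prop) a b)
  rw [intervalIntegral.integral_const_mul, integral_exp_mul_sub hL.ne'] at hbound
  calc |∫ t in a..b, f t| ≤ C * ((exp (L * (b - a)) - 1) / L) := hbound
    _ ≤ C * (exp (L * (b - a)) / L) := by gcongr; linarith
    _ = C / L * exp (L * (b - a)) := by ring

noncomputable def tripleIntegral (x₀ y₀ x y : ℝ) (F : ℝ → ℝ → ℝ) : ℝ :=
  ∫ s in x₀..x, ∫ η in x₀..s, ∫ τ in y₀..y, F η τ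

section tripleIntegral

variable {x₀ y₀ x y : ℝ} {F G : ℝ → ℝ → ℝ}

theorem tripleIntegral_congr (hx : x₀ ≤ x) (hy : y₀ ≤ y)
    (h : ∀ η ∈ Icc x₀ x, ∀ τ ∈ Icc y₀ y, F η τ = G η τ) :
    tripleIntegral x₀ y₀ x y F = tripleIntegral x₀ y₀ x y G := by
  refine intervalIntegral.integral_congr fun s hs => ?_
  rw [uIcc_of_le hx] at hs
  refine intervalIntegral.integral_congr fun η hη => ?_
  rw [uIcc_of_le hs.1] at hη
  refine intervalIntegral.integral_congr fun τ hτ => ?_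
  rw [uIcc_of_le hy] at hτ
  exact h η ⟨hη.1, hη.2.trans hs.2⟩ τ hτ

theorem tripleIntegral_sub_of_continuous (hF : Continuous (Function.uncurry F))
    (hG : Continuous (Function.uncurry G)) :
    tripleIntegral x₀ y₀ x y (fun η τ => F η τ - G η τ) =
      tripleIntegral x₀ y₀ x y F - tripleIntegral x₀ y₀ x y G := by
  have inner (H : ℝ → ℝ → ℝ) (hH : Continuous (Function.uncurry H)) :
      Continuous fun η => ∫ τ in y₀..y, H η τ :=
    intervalIntegral.continuous_parametric_intervalIntegral_of_continuous' hH y₀ y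
  have middle (H : ℝ → ℝ → ℝ) (hH : Continuous (Function.uncurry H)) :
      Continuous fun s => ∫ η in x₀..s, ∫ τ in y₀..y, H η τ :=
    intervalIntegral.continuous_primitive (fun _ _ => (inner H hH).intervalIntegrable _ _) x₀
  unfold tripleIntegral
  rw [← intervalIntegral.integral_sub ((middle F hF).intervalIntegrable _ _)
    ((middle G hG).intervalIntegrable _ _)]
  refine intervalIntegral.integral_congr fun s _ => ?_
  rw [← intervalIntegral.integral_sub ((inner F hF).intervalIntegrable _ _)
    ((inner G hG).intervalIntegrable _ _)]
  refine intervalIntegral.integral_congr fun η _ => ?_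
  exact intervalIntegral.integral_sub
    ((hF.comp (Continuous.prodMk_right η)).intervalIntegrable _ _)
    ((hG.comp (Continuous.prodMk_right η)).intervalIntegrable _ _)

theorem continuous_uncurry_max_max {x₀ y₀ : ℝ} {F : ℝ → ℝ → ℝ}
    (hF : ContinuousOn (fun z : ℝ × ℝ => F z.1 z.2) (Ici x₀ ×ˢ Ici y₀)) :
    Continuous (Function.uncurry fun η τ => F (max η x₀) (max τ y₀)) :=
  hF.comp_continuous (f := fun z : ℝ × ℝ => (max z.1 x₀, max z.2 y₀)) (by fun_prop)
    fun z => ⟨le_max_right z.1 x₀, le_max_right z.2 y₀⟩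

theorem tripleIntegral_sub (hx : x₀ ≤ x) (hy : y₀ ≤ y)
    (hF : ContinuousOn (fun z : ℝ × ℝ => F z.1 z.2) (Ici x₀ ×ˢ Ici y₀))
    (hG : ContinuousOn (fun z : ℝ × ℝ => G z.1 z.2) (Ici x₀ ×ˢ Ici y₀)) :
    tripleIntegral x₀ y₀ x y (fun η τ => F η τ - G η τ) =
      tripleIntegral x₀ y₀ x y F - tripleIntegral x₀ y₀ x y G := by
  -- precomposing with `max` extends the integrands continuously to the whole plane
  have clamp (H : ℝ → ℝ → ℝ) : tripleIntegral x₀ y₀ x y H =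
      tripleIntegral x₀ y₀ x y fun η τ => H (max η x₀) (max τ y₀) :=
    tripleIntegral_congr hx hy fun η hη τ hτ => by rw [max_eq_left hη.1, max_eq_left hτ.1]
  rw [clamp F, clamp G, clamp, ← tripleIntegral_sub_of_continuous
    (continuous_uncurry_max_max hF) (continuous_uncurry_max_max hG)]

theorem abs_tripleIntegral_le {B L : ℝ} (hx : x₀ ≤ x) (hy : y₀ ≤ y) (hL : 0 < L) (hB : 0 ≤ B)
    (hF : ∀ η ∈ Icc x₀ x, ∀ τ ∈ Icc y₀ y, |F η τ| ≤ B * exp (L * (η - x₀))) :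
    |tripleIntegral x₀ y₀ x y F| ≤ B * (y - y₀) / L ^ 2 * exp (L * (x - x₀)) := by
  have hBy : 0 ≤ B * (y - y₀) := mul_nonneg hB (sub_nonneg.2 hy)
  have inner (η) (hη : η ∈ Icc x₀ x) :
      |∫ τ in y₀..y, F η τ| ≤ B * (y - y₀) * exp (L * (η - x₀)) := by
    have := intervalIntegral.norm_integral_le_of_norm_le_const (f := F η) fun τ hτ =>
      hF η hη τ (Ioc_subset_Icc_self (uIoc_of_le hy ▸ hτ))
    rwa [Real.norm_eq_abs, abs_of_nonneg (sub_nonneg.2 hy), mul_right_comm] at this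
  have middle (s) (hs : s ∈ Icc x₀ x) :
      |∫ η in x₀..s, ∫ τ in y₀..y, F η τ| ≤ B * (y - y₀) / L * exp (L * (s - x₀)) :=
    abs_intervalIntegral_le_exp hs.1 hL hBy fun η hη => inner η ⟨hη.1, hη.2.trans hs.2⟩
  have := abs_intervalIntegral_le_exp hx hL (div_nonneg hBy hL.le) middle
  rwa [div_div, ← sq] at this

end tripleIntegral

theorem eqOn_zero_of_weighted_contraction {x₀ y₀ X Y C : ℝ} {d : ℝ → ℝ → ℝ}
    (hd : ContinuousOn (fun z : ℝ × ℝ => d z.1 z.2) (Icc x₀ X ×ˢ Icc y₀ Y)) (hC : 0 ≤ C)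
    (h : ∀ M, 0 ≤ M → ∀ L, 0 < L →
      (∀ x ∈ Icc x₀ X, ∀ y ∈ Icc y₀ Y, |d x y| ≤ M * exp (L * (x - x₀))) →
      ∀ x ∈ Icc x₀ X, ∀ y ∈ Icc y₀ Y, |d x y| ≤ C * M * (y - y₀) / L ^ 2 * exp (L * (x - x₀))) :
    ∀ x ∈ Icc x₀ X, ∀ y ∈ Icc y₀ Y, d x y = 0 := by
  intro x hx y hy
  obtain ⟨L, hL, hCL⟩ : ∃ L : ℝ, 0 < L ∧ 2 * C * (Y - y₀) ≤ L ^ 2 := by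
    have : 0 ≤ 2 * C * (Y - y₀) := by have := hy.1.trans hy.2; positivity
    exact ⟨2 * C * (Y - y₀) + 1, by positivity, by nlinarith⟩
  set ψ : ℝ × ℝ → ℝ := fun z => |d z.1 z.2| / exp (L * (z.1 - x₀))
  have hψ : ContinuousOn ψ (Icc x₀ X ×ˢ Icc y₀ Y) :=
    hd.abs.div (by fun_prop) fun _ _ => (exp_pos _).ne'
  obtain ⟨z, hz, hmax⟩ :=
    (isCompact_Icc.prod isCompact_Icc).exists_isMaxOn ⟨(x, y), hx, hy⟩ hψ
  have hweighted : ∀ x ∈ Icc x₀ X, ∀ y ∈ Icc y₀ Y, |d x y| ≤ ψ z * exp (L * (x - x₀)) :=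
    fun x hx y hy => (div_le_iff₀ (exp_pos _)).1 (hmax (mk_mem_prod hx hy))
  have hM : 0 ≤ ψ z := div_nonneg (abs_nonneg _) (exp_pos _).le
  have hhalf : ∀ x ∈ Icc x₀ X, ∀ y ∈ Icc y₀ Y, ψ (x, y) ≤ ψ z / 2 := by
    intro x hx y hy
    refine (div_le_iff₀ (exp_pos _)).2 ((h _ hM L hL hweighted x hx y hy).trans ?_)
    refine mul_le_mul_of_nonneg_right ?_ (exp_pos _).le
    rw [div_le_div_iff₀ (by positivity) two_pos]
    have : C * (y - y₀) ≤ C * (Y - y₀) := by gcongr; exact hy.2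
    nlinarith
  have hmax_le_half : ψ z ≤ ψ z / 2 := hhalf z.1 hz.1 z.2 hz.2
  have hxy : ψ (x, y) ≤ ψ z / 2 := hhalf x hx y hy
  have hψxy : |d x y| / exp (L * (x - x₀)) = 0 := le_antisymm (by linarith) (by positivity)
  simpa [(exp_pos _).ne'] using hψxy

theorem IsCompact.exists_mul_le {α : Type*} [TopologicalSpace α] {s : Set α} (hs : IsCompact s)
    {f g : α → ℝ} (hf : ContinuousOn f s) (hg : ContinuousOn g s) :
    ∃ C, 0 ≤ C ∧ ∀ a ∈ s, ∀ b ∈ s, f a * g b ≤ C := by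
  obtain ⟨Cf, hCf⟩ := hs.exists_bound_of_continuousOn hf
  obtain ⟨Cg, hCg⟩ := hs.exists_bound_of_continuousOn hg
  refine ⟨|Cf| * |Cg|, by positivity, fun a ha b hb => ?_⟩
  calc f a * g b ≤ |f a| * |g b| := by rw [← abs_mul]; exact le_abs_self _
    _ ≤ |Cf| * |Cg| :=
      mul_le_mul ((hCf a ha).trans (le_abs_self _)) ((hCg b hb).trans (le_abs_self _))
        (abs_nonneg _) (abs_nonneg _)

theorem ContinuousOn.kernel_comp {K : ℝ → ℝ → ℝ → ℝ → ℝ → ℝ} {u : ℝ → ℝ → ℝ} {x₀ y₀ x y : ℝ}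
    (hK : ContinuousOn (fun z : ℝ × ℝ × ℝ × ℝ × ℝ => K z.1 z.2.1 z.2.2.1 z.2.2.2.1 z.2.2.2.2)
      (Ici x₀ ×ˢ Ici y₀ ×ˢ Ici x₀ ×ˢ Ici y₀ ×ˢ (univ : Set ℝ)))
    (hu : ContinuousOn (fun z : ℝ × ℝ => u z.1 z.2) (Ici x₀ ×ˢ Ici y₀)) (hx : x₀ ≤ x)
    (hy : y₀ ≤ y) :
    ContinuousOn (fun z : ℝ × ℝ => K x y z.1 z.2 (u z.1 z.2)) (Ici x₀ ×ˢ Ici y₀) :=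
  hK.comp (continuousOn_const.prodMk (continuousOn_const.prodMk
    (continuousOn_fst.prodMk (continuousOn_snd.prodMk hu))))
    fun _ hz => ⟨hx, hy, hz.1, hz.2, mem_univ _⟩

theorem stmt_12_general (x₀ y₀ : ℝ) (g : ℝ → ℝ → ℝ) (K : ℝ → ℝ → ℝ → ℝ → ℝ → ℝ)
    (q r : ℝ → ℝ → ℝ) (u₁ u₂ : ℝ → ℝ → ℝ)
    (hK_cont : ContinuousOn
      (fun z : ℝ × ℝ × ℝ × ℝ × ℝ => K z.1 z.2.1 z.2.2.1 z.2.2.2.1 z.2.2.2.2)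
      (Set.Ici x₀ ×ˢ Set.Ici y₀ ×ˢ Set.Ici x₀ ×ˢ Set.Ici y₀ ×ˢ (Set.univ : Set ℝ)))
    (hq_cont : ContinuousOn (fun z : ℝ × ℝ => q z.1 z.2) (Set.Ici x₀ ×ˢ Set.Ici y₀))
    (hr_cont : ContinuousOn (fun z : ℝ × ℝ => r z.1 z.2) (Set.Ici x₀ ×ˢ Set.Ici y₀))
    (hK_lip : ∀ x y η τ, x₀ ≤ x → y₀ ≤ y → x₀ ≤ η → y₀ ≤ τ → ∀ a b : ℝ,
      |K x y η τ a - K x y η τ b| ≤ q x y * r η τ * |a - b|)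
    (hu₁_cont : ContinuousOn (fun z : ℝ × ℝ => u₁ z.1 z.2) (Set.Ici x₀ ×ˢ Set.Ici y₀))
    (hu₂_cont : ContinuousOn (fun z : ℝ × ℝ => u₂ z.1 z.2) (Set.Ici x₀ ×ˢ Set.Ici y₀))
    (hu₁_sol : ∀ x y, x₀ ≤ x → y₀ ≤ y →
      u₁ x y = g x y + ∫ s in x₀..x, ∫ η in x₀..s, ∫ τ in y₀..y,
        K x y η τ (u₁ η τ))
    (hu₂_sol : ∀ x y, x₀ ≤ x → y₀ ≤ y →
      u₂ x y = g x y + ∫ s in x₀..x, ∫ η in x₀..s, ∫ τ in y₀..y,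
        K x y η τ (u₂ η τ)) :
    ∀ x y, x₀ ≤ x → y₀ ≤ y → u₁ x y = u₂ x y := by
  intro X Y hX hY
  have hrect : Icc x₀ X ×ˢ Icc y₀ Y ⊆ Ici x₀ ×ˢ Ici y₀ :=
    prod_mono Icc_subset_Ici_self Icc_subset_Ici_self
  obtain ⟨C, hC, hqr⟩ := (isCompact_Icc.prod isCompact_Icc).exists_mul_le
    (hq_cont.mono hrect) (hr_cont.mono hrect)
  have hdiff (x y : ℝ) (hx : x₀ ≤ x) (hy : y₀ ≤ y) : u₁ x y - u₂ x y =
      tripleIntegral x₀ y₀ x y fun η τ => K x y η τ (u₁ η τ) - K x y η τ (u₂ η τ) := by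
    rw [tripleIntegral_sub hx hy (hK_cont.kernel_comp hu₁_cont hx hy)
      (hK_cont.kernel_comp hu₂_cont hx hy), hu₁_sol x y hx hy, hu₂_sol x y hx hy,
      add_sub_add_left_eq_sub]
    rfl
  refine sub_eq_zero.1 (eqOn_zero_of_weighted_contraction (d := fun x y => u₁ x y - u₂ x y)
    ((hu₁_cont.sub hu₂_cont).mono hrect) hC ?_ X ⟨hX, le_rfl⟩ Y ⟨hY, le_rfl⟩)
  intro M hM L hL hweighted x hx y hy
  rw [hdiff x y hx.1 hy.1]
  refine abs_tripleIntegral_le hx.1 hy.1 hL (mul_nonneg hC hM) fun η hη τ hτ => ?_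
  have hητ : (η, τ) ∈ Icc x₀ X ×ˢ Icc y₀ Y := ⟨⟨hη.1, hη.2.trans hx.2⟩, hτ.1, hτ.2.trans hy.2⟩
  calc |K x y η τ (u₁ η τ) - K x y η τ (u₂ η τ)|
      ≤ q x y * r η τ * |u₁ η τ - u₂ η τ| := hK_lip x y η τ hx.1 hy.1 hη.1 hτ.1 _ _
    _ ≤ C * (M * exp (L * (η - x₀))) := mul_le_mul (hqr (x, y) ⟨hx, hy⟩ (η, τ) hητ)
        (hweighted η hητ.1 τ hητ.2) (abs_nonneg _) hC
    _ = C * M * exp (L * (η - x₀)) := (mul_assoc _ _ _).symm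

/-- Continuous (𝕋₁ = 𝕋₂ = ℝ) uniqueness remark after Theorem 3.2: the integral
equation u(x,y) = g(x,y) + ∫∫∫ K(x,y,η,τ,u(η,τ)) with a Lipschitz-type kernel
has at most one continuous solution on [x₀,∞) × [y₀,∞). -/
theorem stmt_12 (x₀ y₀ : ℝ) (g : ℝ → ℝ → ℝ) (K : ℝ → ℝ → ℝ → ℝ → ℝ → ℝ)
    (q r : ℝ → ℝ → ℝ) (u₁ u₂ : ℝ → ℝ → ℝ)
    (hg_cont : ContinuousOn (fun z : ℝ × ℝ => g z.1 z.2) (Set.Ici x₀ ×ˢ Set.Ici y₀))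
    (hK_cont : ContinuousOn
      (fun z : ℝ × ℝ × ℝ × ℝ × ℝ => K z.1 z.2.1 z.2.2.1 z.2.2.2.1 z.2.2.2.2)
      (Set.Ici x₀ ×ˢ Set.Ici y₀ ×ˢ Set.Ici x₀ ×ˢ Set.Ici y₀ ×ˢ (Set.univ : Set ℝ)))
    (hq_cont : ContinuousOn (fun z : ℝ × ℝ => q z.1 z.2) (Set.Ici x₀ ×ˢ Set.Ici y₀))
    (hr_cont : ContinuousOn (fun z : ℝ × ℝ => r z.1 z.2) (Set.Ici x₀ ×ˢ Set.Ici y₀))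
    (hq_nonneg : ∀ x y, x₀ ≤ x → y₀ ≤ y → 0 ≤ q x y)
    (hr_nonneg : ∀ x y, x₀ ≤ x → y₀ ≤ y → 0 ≤ r x y)
    (hK_lip : ∀ x y η τ, x₀ ≤ x → y₀ ≤ y → x₀ ≤ η → y₀ ≤ τ → ∀ a b : ℝ,
      |K x y η τ a - K x y η τ b| ≤ q x y * r η τ * |a - b|)
    (hu₁_cont : ContinuousOn (fun z : ℝ × ℝ => u₁ z.1 z.2) (Set.Ici x₀ ×ˢ Set.Ici y₀))
    (hu₂_cont : ContinuousOn (fun z : ℝ × ℝ => u₂ z.1 z.2) (Set.Ici x₀ ×ˢ Set.Ici y₀))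
    (hu₁_sol : ∀ x y, x₀ ≤ x → y₀ ≤ y →
      u₁ x y = g x y + ∫ s in x₀..x, ∫ η in x₀..s, ∫ τ in y₀..y,
        K x y η τ (u₁ η τ))
    (hu₂_sol : ∀ x y, x₀ ≤ x → y₀ ≤ y →
      u₂ x y = g x y + ∫ s in x₀..x, ∫ η in x₀..s, ∫ τ in y₀..y,
        K x y η τ (u₂ η τ)) :
    ∀ x y, x₀ ≤ x → y₀ ≤ y → u₁ x y = u₂ x y :=
  stmt_12_general x₀ y₀ g K q r u₁ u₂ hK_cont hq_cont hr_cont hK_lip hu₁_cont hu₂_cont hu₁_sol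
    hu₂_sol
end

section
/- Let x₀, y₀ ∈ ℕ, let g : ℕ × ℕ → ℝ and K : ℕ × ℕ × ℕ × ℕ × ℝ → ℝ, and let q, r : ℕ × ℕ → [0,∞) be such that |K(x,y,η,τ,u) − K(x,y,η,τ,v)| ≤ q(x,y) r(η,τ) |u − v| for all arguments and all u, v ∈ ℝ. If u₁, u₂ : ℕ × ℕ → ℝ both satisfy u_i(x,y) = g(x,y) + Σ_{s=x₀}^{x−1} Σ_{η=x₀}^{s−1} Σ_{τ=y₀}^{y−1} K(x,y,η,τ,u_i(η,τ)) for all x ≥ x₀ and y ≥ y₀, then u₁(x,y) = u₂(x,y) for all x ≥ x₀ and y ≥ y₀, i.e., the sum equation has at most one solution on this domain. -/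
/-- Discrete (𝕋₁ = 𝕋₂ = ℤ) uniqueness remark after Theorem 3.2: the sum
equation u(x,y) = g(x,y) + ΣΣΣ K(x,y,η,τ,u(η,τ)) with a Lipschitz-type kernel
has at most one solution on the integers ≥ x₀ and ≥ y₀. -/
theorem stmt_13 (x₀ y₀ : ℕ) (g : ℕ → ℕ → ℝ) (K : ℕ → ℕ → ℕ → ℕ → ℝ → ℝ)
    (q r : ℕ → ℕ → ℝ) (u₁ u₂ : ℕ → ℕ → ℝ)
    (hq_nonneg : ∀ x y, 0 ≤ q x y)
    (hr_nonneg : ∀ x y, 0 ≤ r x y)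
    (hK_lip : ∀ x y η τ, ∀ a b : ℝ,
      |K x y η τ a - K x y η τ b| ≤ q x y * r η τ * |a - b|)
    (hu₁_sol : ∀ x y, x₀ ≤ x → y₀ ≤ y →
      u₁ x y = g x y + ∑ s ∈ Finset.Ico x₀ x, ∑ η ∈ Finset.Ico x₀ s,
        ∑ τ ∈ Finset.Ico y₀ y, K x y η τ (u₁ η τ))
    (hu₂_sol : ∀ x y, x₀ ≤ x → y₀ ≤ y →
      u₂ x y = g x y + ∑ s ∈ Finset.Ico x₀ x, ∑ η ∈ Finset.Ico x₀ s,
        ∑ τ ∈ Finset.Ico y₀ y, K x y η τ (u₂ η τ)) :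
    ∀ x y, x₀ ≤ x → y₀ ≤ y → u₁ x y = u₂ x y := by
  intro x
  induction x using Nat.strong_induction_on with
  | _ x ih =>
    intro y hx hy
    rw [hu₁_sol x y hx hy, hu₂_sol x y hx hy]
    congr 1
    refine Finset.sum_congr rfl fun s hs => Finset.sum_congr rfl fun η hη =>
      Finset.sum_congr rfl fun τ hτ => ?_
    have hsx := (Finset.mem_Ico.mp hs).2
    have hη' := Finset.mem_Ico.mp hη
    have hτ' := Finset.mem_Ico.mp hτ
    rw [ih η (lt_trans hη'.2 hsx) τ hη'.1 hτ'.1]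
end
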